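/- In the majority protocol, if the initial configuration C₀ has an absolute majority datum d (i.e., C₀(d) > Σ_{d'≠d} C₀(d') counting agents), then in every configuration Cᵢ of any execution, at least one agent of datum d remains unpaired: Cᵢ(d, U) > 0. -/
import Mathlib


/-- A transition set: `((p,q), s, (p',q'))` where `s = true` encodes the data
comparison `=` and `s = false` encodes `≠`. -/
abbrev PTrans (Q : Type*) := Set ((Q × Q) × Bool × (Q × Q))

/-- The configuration with a single agent of datum `d` in state `q`. -/
noncomputable def sing {D Q : Type*} (d : D) (q : Q) : D →₀ (Q →₀ ℕ) :=
  Finsupp.single d (Finsupp.single q 1)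

/-- One step of a population protocol with unordered data. -/
def Step {D Q : Type*} (δ : PTrans Q) (C C' : D →₀ (Q →₀ ℕ)) : Prop :=
  ∃ (p q p' q' : Q) (s : Bool) (d e : D),
    ((p, q), s, (p', q')) ∈ δ ∧ (if s then d = e else d ≠ e) ∧
    sing d p + sing e q ≤ C ∧
    C' = C - (sing d p + sing e q) + (sing d p' + sing e q')

/-- Reachability: reflexive-transitive closure of the step relation. -/
def Reach {D Q : Type*} (δ : PTrans Q) : (D →₀ (Q →₀ ℕ)) → (D →₀ (Q →₀ ℕ)) → Prop :=
  Relation.ReflTransGen (Step δ)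

/-- The embedding order on configurations. -/
def Embeds {D Q : Type*} (C C' : D →₀ (Q →₀ ℕ)) : Prop :=
  ∃ ρ : D ↪ D, ∀ d, C d ≤ C' (ρ d)

/-- An execution of the protocol. -/
def IsExec {D Q : Type*} (δ : PTrans Q) (e : ℕ → (D →₀ (Q →₀ ℕ))) : Prop :=
  ∀ i, Step δ (e i) (e (i + 1))

/-- Fairness: any configuration reachable from infinitely many configurations of the
execution occurs infinitely often along the execution. -/
def Fair {D Q : Type*} (δ : PTrans Q) (e : ℕ → (D →₀ (Q →₀ ℕ))) : Prop :=
  ∀ C', {i | Reach δ (e i) C'}.Infinite → {i | e i = C'}.Infinite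

/-- The execution converges to the output value given by the proposition `P`
(`true` if `P` holds, `false` otherwise): from some point on, every agent's state
has that output. -/
def Converges {D Q : Type*} (O : Q → Bool) (e : ℕ → (D →₀ (Q →₀ ℕ))) (P : Prop) : Prop :=
  ∃ τ, ∀ i, τ ≤ i → ∀ d q, 0 < e i d q → (O q = true ↔ P)


/-- The majority values of the majority protocol. -/
inductive MajVal | Y | N | Ybar | Nbar | y | n
deriving DecidableEq

/-- A state of the majority protocol: the macros `pair`, `grp`, `even` and `maj`. -/
structure MajState where
  pair : Bool
  grp : Bool
  even : Bool
  maj : MajVal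
deriving DecidableEq

open MajVal in
/-- The transitions of the majority protocol: rules (1)–(14), together with the
implicit identity transitions.  The Boolean `s` in `((p,q),s,(p',q'))` is `true` for
the color precondition `d₁ = d₂` and `false` for `d₁ ≠ d₂`. -/
def MajRule : ((MajState × MajState) × Bool × (MajState × MajState)) → Prop :=
  fun t =>
  let p := t.1.1; let q := t.1.2; let s := t.2.1; let p' := t.2.2.1; let q' := t.2.2.2
  -- implicit identity transitions
  (p' = p ∧ q' = q) ∨
  -- (1) pairing
  (s = false ∧ p.pair = false ∧ q.pair = false ∧
    p' = { p with pair := true, even := true } ∧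
    q' = { q with pair := true, even := true }) ∨
  -- (2)
  (s = false ∧ p.pair = false ∧ q.pair = true ∧ q.grp = true ∧ q.maj = Y ∧
    p' = p ∧ q' = { q with grp := false, maj := N }) ∨
  -- (3)
  (s = true ∧ p.pair = false ∧ q.pair = true ∧ q.grp = false ∧ q.maj = N ∧
    p' = p ∧ q' = { q with grp := true, maj := Y }) ∨
  -- (4)
  (s = false ∧ p.pair = false ∧ q.pair = true ∧ q.grp = true ∧ (q.maj = y ∨ q.maj = n) ∧
    p' = p ∧ q' = { q with maj := Nbar }) ∨
  -- (5)
  (s = true ∧ p.pair = false ∧ q.pair = true ∧ q.grp = false ∧ (q.maj = y ∨ q.maj = n) ∧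
    p' = p ∧ q' = { q with maj := Ybar }) ∨
  -- (6)
  (p.grp = true ∧ p.maj = Nbar ∧ q.grp = false ∧ (q.maj = y ∨ q.maj = n) ∧
    p' = { p with grp := false, maj := N } ∧ q' = { q with maj := N }) ∨
  -- (7)
  (p.grp = false ∧ p.maj = Ybar ∧ q.grp = true ∧ (q.maj = y ∨ q.maj = n) ∧
    p' = { p with grp := true, maj := Y } ∧ q' = { q with maj := Y }) ∨
  -- (8)
  (p.grp = true ∧ p.maj = Nbar ∧ q.grp = false ∧ q.maj = Ybar ∧
    p' = { p with grp := false, maj := n } ∧ q' = { q with grp := true, maj := n }) ∨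
  -- (9)
  (p.pair = false ∧ q.even = true ∧ p' = p ∧ q' = { q with even := false }) ∨
  -- (10)
  (p.pair = true ∧ p.even = true ∧ q.pair = true ∧ q.even = false ∧
    p' = p ∧ q' = { q with even := true }) ∨
  -- (11)
  (p.maj = Y ∧ q.maj = N ∧ p' = { p with maj := n } ∧ q' = { q with maj := n }) ∨
  -- (12)
  (p.maj = Y ∧ q.maj = n ∧ p' = p ∧ q' = { q with maj := y }) ∨
  -- (13)
  (p.maj = N ∧ q.maj = y ∧ p' = p ∧ q' = { q with maj := n }) ∨
  -- (14)
  (p.maj = n ∧ q.maj = y ∧ p' = p ∧ q' = { q with maj := n })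

/-- The transition set of the majority protocol. -/
def majDelta : PTrans MajState := {t | MajRule t}

/-- The unique initial state of the majority protocol:
unpaired, in the majority group, even bit false, majority value `Y`. -/
def majInit : MajState := ⟨false, true, false, MajVal.Y⟩

/-- The number of agents of `C` whose state satisfies `S`. -/
noncomputable def cardB {D Q : Type*} (S : Q → Bool) (C : D →₀ (Q →₀ ℕ)) : ℕ :=
  C.sum fun _ f => f.sum fun q c => if S q then c else 0

/-! ### Auxiliary machinery -/

/-- Number of unpaired agents in a multiset of states. -/
noncomputable def pcnt (g : MajState →₀ ℕ) : ℕ :=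
  g.sum fun q c => if q.pair then 0 else c

/-- Unpaired agents of datum `d`. -/
noncomputable def uCnt {D : Type*} (C : D →₀ (MajState →₀ ℕ)) (d : D) : ℕ :=
  pcnt (C d)

/-- Total unpaired agents. -/
noncomputable def tCnt {D : Type*} (C : D →₀ (MajState →₀ ℕ)) : ℕ :=
  C.sum fun _ g => pcnt g

lemma pcnt_zero : pcnt (0 : MajState →₀ ℕ) = 0 := by simp [pcnt]

lemma pcnt_add (g h : MajState →₀ ℕ) : pcnt (g + h) = pcnt g + pcnt h := by
  classical
  unfold pcnt
  rw [Finsupp.sum_add_index]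
  · intro q _; simp
  · intro q _ a b; split <;> simp

lemma pcnt_single (q : MajState) (n : ℕ) :
    pcnt (Finsupp.single q n) = if q.pair then 0 else n := by
  classical
  unfold pcnt
  rw [Finsupp.sum_single_index] ; simp

lemma uCnt_add {D : Type*} (C C' : D →₀ (MajState →₀ ℕ)) (d : D) :
    uCnt (C + C') d = uCnt C d + uCnt C' d := by
  simp [uCnt, Finsupp.add_apply, pcnt_add]

lemma tCnt_add {D : Type*} (C C' : D →₀ (MajState →₀ ℕ)) :
    tCnt (C + C') = tCnt C + tCnt C' := by
  classical
  unfold tCnt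
  rw [Finsupp.sum_add_index]
  · intro d _; exact pcnt_zero
  · intro d _ a b; exact pcnt_add a b

lemma uCnt_sing {D : Type*} [DecidableEq D] (d d0 : D) (p : MajState) :
    uCnt (sing d p) d0 = if d0 = d then (if p.pair then 0 else 1) else 0 := by
  classical
  unfold uCnt sing
  rw [Finsupp.single_apply]
  by_cases h : d0 = d
  · subst h; simp [pcnt_single]
  · rw [if_neg (Ne.symm h), if_neg h, pcnt_zero]

lemma tCnt_sing {D : Type*} (d : D) (p : MajState) :
    tCnt (sing d p) = if p.pair then 0 else 1 := by
  classical
  unfold tCnt sing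
  rw [Finsupp.sum_single_index pcnt_zero, pcnt_single]

open MajVal in
lemma majRule_pair {p q p' q' : MajState} {s : Bool}
    (h : MajRule ((p, q), s, (p', q'))) :
    (p'.pair = p.pair ∧ q'.pair = q.pair) ∨
    (s = false ∧ p.pair = false ∧ q.pair = false ∧
      p'.pair = true ∧ q'.pair = true) := by
  unfold MajRule at h
  dsimp only at h
  rcases h with ⟨hp, hq⟩ | ⟨hs, hp, hq, hp', hq'⟩ | h | h | h | h | h | h | h | h | h | h | h | h | h
  · left; rw [hp, hq]; exact ⟨rfl, rfl⟩
  · right; subst hp' hq'; exact ⟨hs, hp, hq, rfl, rfl⟩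
  all_goals
    left
    first
      | (obtain ⟨_, _, _, _, _, hp', hq'⟩ := h; subst hp' hq'; constructor <;> rfl)
      | (obtain ⟨_, _, _, _, hp', hq'⟩ := h; subst hp' hq'; constructor <;> rfl)
      | (obtain ⟨_, _, hp', hq'⟩ := h; subst hp' hq'; constructor <;> rfl)
      | (obtain ⟨_, _, _, hp', hq'⟩ := h; subst hp' hq'; constructor <;> rfl)

lemma step_inv {D : Type*} [DecidableEq D] {C C' : D →₀ (MajState →₀ ℕ)}
    (h : Step majDelta C C') (d0 : D)
    (hI : tCnt C < 2 * uCnt C d0) : tCnt C' < 2 * uCnt C' d0 := by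
  classical
  obtain ⟨p, q, p', q', s, d, e, hmem, hs, hle, hC'⟩ := h
  have hle2 : ∀ a b, (sing d p + sing e q) a b ≤ C a b := by
    intro a b
    exact Finsupp.le_def.mp (Finsupp.le_def.mp hle a) b
  set C₀ := C - (sing d p + sing e q) with hC₀
  have hC : C = C₀ + (sing d p + sing e q) := by
    ext a b
    simp only [hC₀, Finsupp.add_apply, Finsupp.tsub_apply]
    exact (Nat.sub_add_cancel (hle2 a b)).symm
  rw [hC] at hI
  rw [hC']
  simp only [tCnt_add, uCnt_add, tCnt_sing, uCnt_sing] at hI ⊢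
  have hrule : MajRule ((p, q), s, (p', q')) := hmem
  rcases majRule_pair hrule with ⟨h1, h2⟩ | ⟨hsf, hp, hq, hp', hq'⟩
  · rw [h1, h2]; exact hI
  · subst hsf
    have hne : d ≠ e := by simpa using hs
    simp only [hp, hq, hp', hq'] at hI ⊢
    by_cases hd : d0 = d <;> by_cases he : d0 = e
    · exact absurd (hd ▸ he) hne
    · simp [hd, he, hne, Ne.symm hne] at hI ⊢; omega
    · simp [hd, he, hne, Ne.symm hne] at hI ⊢; omega
    · simp [hd, he, hne, Ne.symm hne] at hI ⊢; omega

lemma pcnt_pos {g : MajState →₀ ℕ} (h : 0 < pcnt g) :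
    ∃ q : MajState, q.pair = false ∧ 0 < g q := by
  classical
  by_contra hc
  push_neg at hc
  have : pcnt g = 0 := by
    unfold pcnt
    apply Finset.sum_eq_zero
    intro q _
    by_cases hq : q.pair
    · simp [hq]
    · have := hc q (by simpa using hq)
      simp [hq]; omega
  omega

/-- If the initial configuration has an absolute majority datum `d` (more agents of
datum `d` than of all other data combined), then in every configuration of any
execution of the majority protocol at least one agent of datum `d` is unpaired. -/
theorem maj_datum_stays_unpaired {D : Type*} [DecidableEq D]
    (e : ℕ → (D →₀ (MajState →₀ ℕ)))
    (h0 : ∀ d q, 0 < e 0 d q → q = majInit)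
    (hexec : IsExec majDelta e)
    (d : D)
    (hmaj : (∑ d' ∈ (e 0).support.erase d, ((e 0) d').sum fun _ c => c) <
              ((e 0) d).sum fun _ c => c)
    (i : ℕ) :
    ∃ q : MajState, q.pair = false ∧ 0 < e i d q := by
  classical
  have hinv : ∀ i, tCnt (e i) < 2 * uCnt (e i) d := by
    intro i
    induction i with
    | zero =>
      have hp : ∀ d' : D, pcnt (e 0 d') = (e 0 d').sum fun _ c => c := by
        intro d'
        unfold pcnt Finsupp.sum
        apply Finset.sum_congr rfl
        intro q hq
        have hpos : 0 < e 0 d' q := Nat.pos_of_ne_zero (Finsupp.mem_support_iff.mp hq)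
        have hqi := h0 d' q hpos
        subst hqi
        simp [majInit]
      have hd : d ∈ (e 0).support := by
        rw [Finsupp.mem_support_iff]
        intro h
        rw [h] at hmaj
        simp at hmaj
      have ht : tCnt (e 0) =
          pcnt (e 0 d) + ∑ d' ∈ (e 0).support.erase d, pcnt (e 0 d') := by
        unfold tCnt Finsupp.sum
        rw [← Finset.add_sum_erase _ _ hd]
      have hsum : (∑ d' ∈ (e 0).support.erase d, pcnt (e 0 d')) =
          ∑ d' ∈ (e 0).support.erase d, (e 0 d').sum fun _ c => c :=
        Finset.sum_congr rfl fun d' _ => hp d'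
      have hu : uCnt (e 0) d = (e 0 d).sum fun _ c => c := hp d
      rw [ht, hsum, hu, hp d]
      omega
    | succ i ih => exact step_inv (hexec i) d ih
  have hI := hinv i
  have hu : 0 < pcnt (e i d) := by
    have : uCnt (e i) d = pcnt (e i d) := rfl
    omega
  exact pcnt_pos hu
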